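/- arXiv:2008.12000 — 3 statements merged into one kernel-verified Lean document; each statement's English description precedes it below -/
import Mathlib

section
/- Let n ≥ 1, let λ = (λ₁ ≥ ⋯ ≥ λ_n ≥ 0) and μ = (μ₁ ≥ ⋯ ≥ μ_n ≥ 0) be partitions such that μ_k > λ_k for some k. For each pair (i,j) with 1 ≤ i,j ≤ n let M_{i,j} = e_{λ_i − i − μ_j + j}(v_{i,j}) for arbitrary finite lists of variables v_{i,j} over a commutative ring, where e_m = 0 for m < 0. Then det(M) = 0. -/
/-- `esym k l` is the k-th elementary symmetric polynomial of the entries of `l`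
(with `esym 0 l = 1`). -/
def esym {R : Type*} [CommRing R] : ℕ → List R → R
  | 0, _ => 1
  | _ + 1, [] => 0
  | k + 1, a :: l => esym (k + 1) l + a * esym k l
  termination_by k l => (l.length, k)

/-- `hsym k l` is the k-th complete homogeneous symmetric polynomial of the entries
of `l` (with `hsym 0 l = 1`). -/
def hsym {R : Type*} [CommRing R] : ℕ → List R → R
  | 0, _ => 1
  | _ + 1, [] => 0
  | k + 1, a :: l => hsym (k + 1) l + a * hsym k (a :: l)
  termination_by k l => (k, l.length)

/-- elementary symmetric polynomial with integer index: 0 in negative degrees. -/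
def esymZ {R : Type*} [CommRing R] (k : ℤ) (l : List R) : R :=
  if 0 ≤ k then esym k.toNat l else 0

/-- complete homogeneous symmetric polynomial with integer index: 0 in negative degrees. -/
def hsymZ {R : Type*} [CommRing R] (k : ℤ) (l : List R) : R :=
  if 0 ≤ k then hsym k.toNat l else 0

/-- `seg f a b = [f (a+1), ..., f b]`, the empty list if `b ≤ a`. -/
def seg {R : Type*} [CommRing R] (f : ℕ → R) (a b : ℕ) : List R :=
  (List.range (b - a)).map fun m => f (a + 1 + m)

theorem esymZ_of_neg {R : Type*} [CommRing R] {k : ℤ} (hk : k < 0) (l : List R) :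
    esymZ k l = 0 :=
  if_neg hk.not_ge

/-- Pigeonhole: `σ` cannot map the `k + 1` indices `≤ k` into the `k` indices `< k`. -/
theorem Equiv.Perm.exists_le_and_le_apply {n : ℕ} (σ : Equiv.Perm (Fin n)) (k : Fin n) :
    ∃ j ≤ k, k ≤ σ j := by
  by_contra! h
  have hcard : (Finset.Iic k).card ≤ (Finset.Iio k).card :=
    Finset.card_le_card_of_injOn σ (fun j hj => Finset.mem_Iio.mpr (h j (Finset.mem_Iic.mp hj)))
      σ.injective.injOn
  rw [Fin.card_Iic, Fin.card_Iio] at hcard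
  omega

/-- The zero block is `(n - k) × (k + 1)`, too large for any permutation to avoid. -/
theorem Matrix.det_eq_zero_of_lower_left_block_eq_zero {R : Type*} [CommRing R] {n : ℕ}
    (M : Matrix (Fin n) (Fin n) R) (k : Fin n) (hM : ∀ i j, k ≤ i → j ≤ k → M i j = 0) :
    M.det = 0 := by
  rw [Matrix.det_apply]
  refine Finset.sum_eq_zero fun σ _ => ?_
  obtain ⟨j, hjk, hkσj⟩ := σ.exists_le_and_le_apply k
  have hprod : ∏ i, M (σ i) i = 0 :=
    Finset.prod_eq_zero (Finset.mem_univ j) (hM (σ j) j hkσj hjk)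
  rw [hprod, smul_zero]

theorem det_esym_not_contained_eq_zero_general {R : Type*} [CommRing R] (n : ℕ)
    (lam μ : Fin n → ℕ)
    (hlam : ∀ i j : Fin n, i ≤ j → lam j ≤ lam i)
    (hμ : ∀ i j : Fin n, i ≤ j → μ j ≤ μ i)
    (hne : ∃ k : Fin n, lam k < μ k)
    (v : Fin n → Fin n → List R) :
    Matrix.det (fun i j : Fin n =>
      esymZ ((lam i : ℤ) - (i.val + 1) - (μ j : ℤ) + (j.val + 1)) (v i j)) = 0 := by
  obtain ⟨k, hk⟩ := hne
  refine Matrix.det_eq_zero_of_lower_left_block_eq_zero _ k fun i j hki hjk => esymZ_of_neg ?_ _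
  have hlam_i : lam i ≤ lam k := hlam k i hki
  have hμ_j : μ k ≤ μ j := hμ j k hjk
  have hji : j.val ≤ i.val := hjk.trans hki
  omega

/-- If λ, μ are partitions with n parts (n ≥ 1) and μ_k > λ_k for some k, the matrix
whose (i,j) entry is e_{λ_i − i − μ_j + j} in an arbitrary list of variables v_{i,j}
(e of negative index is 0) has determinant 0. -/
theorem det_esym_not_contained_eq_zero {R : Type*} [CommRing R] (n : ℕ) (hn : 1 ≤ n)
    (lam μ : Fin n → ℕ)
    (hlam : ∀ i j : Fin n, i ≤ j → lam j ≤ lam i)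
    (hμ : ∀ i j : Fin n, i ≤ j → μ j ≤ μ i)
    (hne : ∃ k : Fin n, lam k < μ k)
    (v : Fin n → Fin n → List R) :
    Matrix.det (fun i j : Fin n =>
      esymZ ((lam i : ℤ) - (i.val + 1) - (μ j : ℤ) + (j.val + 1)) (v i j)) = 0 :=
  det_esym_not_contained_eq_zero_general n lam μ hlam hμ hne v
end

section
/- Let α, β ∈ ℕⁿ satisfy α_i ≤ α_{i+1} + 1 and β_i ≤ β_{i+1} + 1 for all 1 ≤ i ≤ n−1, and let λ, μ be partitions with at most n parts. Suppose α_k ≥ β_k and μ_k < λ_k for some 1 ≤ k ≤ n. Then the n×n determinant det( e_{λ_i − μ_j − i + j}(x_{α_j+1},...,x_{β_i}, t_{μ_j+1},...,t_{λ_i −1}) )_{1≤i,j≤n} equals 0, where the list (x_{α_j+1},...,x_{β_i}) is empty if β_i ≤ α_j and the list (t_{μ_j+1},...,t_{λ_i−1}) is empty if μ_j ≥ λ_i − 1. -/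
/-! The entries in rows `i ≤ k` and columns `j ≥ k` vanish: the steps `α_i ≤ α_{i+1} + 1` and
`β_i ≤ β_{i+1} + 1` give `β_i ≤ β_k + (k - i) ≤ α_k + (k - i) ≤ α_j + (j - i)`, and
`μ_j ≤ μ_k < λ_k ≤ λ_i`, so the entry is an elementary symmetric polynomial of degree
`λ_i - μ_j + (j - i)` in at most `(j - i) + (λ_i - μ_j - 1)` variables. A zero block with
`(k + 1) + (n - k) > n` rows and columns in total meets every term of the Leibniz expansion of
the determinant. -/

theorem esym_eq_zero_of_length_lt {R : Type*} [CommRing R] :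
    ∀ {m : ℕ} {l : List R}, l.length < m → esym m l = 0
  | _ + 1, [], _ => by rw [esym]
  | m + 1, a :: l, h => by
    simp only [List.length_cons] at h
    rw [esym, esym_eq_zero_of_length_lt (l := l) (m := m + 1) (by omega),
      esym_eq_zero_of_length_lt (l := l) (m := m) (by omega), mul_zero, add_zero]

theorem esymZ_eq_zero_of_length_lt {R : Type*} [CommRing R] {m : ℤ} {l : List R}
    (h : (l.length : ℤ) < m) : esymZ m l = 0 := by
  rw [esymZ, if_pos (by omega)]
  exact esym_eq_zero_of_length_lt (by omega)

@[simp]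
theorem length_seg {R : Type*} [CommRing R] (f : ℕ → R) (a b : ℕ) :
    (seg f a b).length = b - a := by
  simp [seg]

theorem monotone_add_val_of_le_add_one {n : ℕ} {f : Fin n → ℕ}
    (hf : ∀ i j : Fin n, j.val = i.val + 1 → f i ≤ f j + 1) :
    Monotone fun i : Fin n => f i + i.val := by
  cases n with
  | zero => exact fun i => i.elim0
  | succ n =>
    refine Fin.monotone_iff_le_succ.2 fun i => ?_
    have := hf i.castSucc i.succ (by simp)
    simp only [Fin.val_castSucc, Fin.val_succ]
    omega

theorem Matrix.det_eq_zero_of_block_eq_zero {m R : Type*} [Fintype m] [DecidableEq m]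
    [CommRing R] (M : Matrix m m R) (s t : Finset m) (hst : Fintype.card m < s.card + t.card)
    (h : ∀ i ∈ s, ∀ j ∈ t, M i j = 0) : M.det = 0 := by
  rw [Matrix.det_apply]
  refine Finset.sum_eq_zero fun σ _ => ?_
  obtain ⟨i, hi⟩ : (s ∩ t.map σ.toEmbedding).Nonempty :=
    Finset.inter_nonempty_of_card_lt_card_add_card (Finset.subset_univ _)
      (Finset.subset_univ _) (by rwa [Finset.card_map, Finset.card_univ])
  obtain ⟨his, hit⟩ := Finset.mem_inter.1 hi
  obtain ⟨j, hjt, rfl⟩ := Finset.mem_map.1 hit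
  rw [Finset.prod_eq_zero (f := fun i => M (σ i) i) (Finset.mem_univ j) (h _ his j hjt), smul_zero]

/-- Lemma E=0: if α, β ∈ ℕⁿ satisfy α_i ≤ α_{i+1}+1 and β_i ≤ β_{i+1}+1 for all i,
λ, μ are partitions with at most n parts, and α_k ≥ β_k, μ_k < λ_k for some k, then
det( e_{λ_i − μ_j − i + j}(x_{α_j+1},...,x_{β_i}, t_{μ_j+1},...,t_{λ_i−1}) ) = 0,
where the variable lists are empty when their index ranges are empty and e of negative
index is 0. -/
theorem det_flagged_esym_eq_zero {R : Type*} [CommRing R] (n : ℕ) (x t : ℕ → R)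
    (α β lam μ : Fin n → ℕ)
    (hα : ∀ i j : Fin n, j.val = i.val + 1 → α i ≤ α j + 1)
    (hβ : ∀ i j : Fin n, j.val = i.val + 1 → β i ≤ β j + 1)
    (hlam : ∀ i j : Fin n, i ≤ j → lam j ≤ lam i)
    (hμ : ∀ i j : Fin n, i ≤ j → μ j ≤ μ i)
    (k : Fin n) (hk : β k ≤ α k) (hk' : μ k < lam k) :
    Matrix.det (fun i j : Fin n =>
      esymZ ((lam i : ℤ) - (μ j : ℤ) - (i.val + 1) + (j.val + 1))
        (seg x (α j) (β i) ++ seg t (μ j) (lam i - 1))) = 0 := by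
  refine Matrix.det_eq_zero_of_block_eq_zero _ (Finset.Iic k) (Finset.Ici k) ?_ ?_
  · simp only [Fintype.card_fin, Fin.card_Iic, Fin.card_Ici]
    omega
  · intro i hi j hj
    rw [Finset.mem_Iic] at hi
    rw [Finset.mem_Ici] at hj
    have hβi : β i + i ≤ β k + k := monotone_add_val_of_le_add_one hβ hi
    have hαk : α k + k ≤ α j + j := monotone_add_val_of_le_add_one hα hj
    have hlam_i := hlam i k hi
    have hμ_j := hμ k j hj
    apply esymZ_eq_zero_of_length_lt
    simp only [List.length_append, length_seg]
    omega
end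

section
/- Let λ and μ be partitions with at most n parts. Then det( e_{λ_i−μ_j−i+j}[X_{(α_j,β_i]} + T_{(μ_j, λ_i−1]}] )_{1≤i,j≤n} = det( e_{λ_i−μ_j−i+j}[X_{(α_j,β_i]} + T_{λ_i−1} − T_{μ_j}] )_{1≤i,j≤n}, where f[A] denotes plethystic substitution, X_{(a,b]} = x_{a+1}+⋯+x_b (zero if a ≥ b), and T_m = t₁+⋯+t_m (T_0 = 0). -/
section AuxLemmas
variable {R : Type*} [CommRing R]


lemma esym_zero (l : List R) : esym 0 l = 1 := by simp [esym]
lemma esym_nil (k : ℕ) : esym k ([] : List R) = if k = 0 then 1 else 0 := by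
  cases k <;> simp [esym]
lemma esym_cons (k : ℕ) (a : R) (l : List R) :
    esym (k + 1) (a :: l) = esym (k + 1) l + a * esym k l := by
  rw [esym]
lemma hsym_zero (l : List R) : hsym 0 l = 1 := by simp [hsym]
lemma hsym_nil (k : ℕ) : hsym k ([] : List R) = if k = 0 then 1 else 0 := by
  cases k <;> simp [hsym]
lemma hsym_cons (k : ℕ) (a : R) (l : List R) :
    hsym (k + 1) (a :: l) = hsym (k + 1) l + a * hsym k (a :: l) := by
  rw [hsym]

open PowerSeries

noncomputable def ge (l : List R) : PowerSeries R := PowerSeries.mk fun k => esym k l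
noncomputable def gh (l : List R) : PowerSeries R := PowerSeries.mk fun k => (-1 : R)^k * hsym k l

lemma ge_nil : ge ([] : List R) = 1 := by
  ext k; cases k <;> simp [ge, esym_nil, coeff_mk]

lemma gh_nil : gh ([] : List R) = 1 := by
  ext k; cases k <;> simp [gh, hsym_nil, coeff_mk]

lemma ge_cons (a : R) (l : List R) : ge (a :: l) = (1 + C a * X) * ge l := by
  ext k
  rw [add_mul, one_mul, mul_assoc, map_add, coeff_C_mul]
  cases k with
  | zero => simp [ge, coeff_mk, esym_zero]
  | succ k => simp [ge, coeff_mk, coeff_succ_X_mul, esym_cons, mul_comm]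

lemma gh_cons (a : R) (l : List R) : (1 + C a * X) * gh (a :: l) = gh l := by
  ext k
  rw [add_mul, one_mul, mul_assoc, map_add, coeff_C_mul]
  cases k with
  | zero => simp [gh, coeff_mk, hsym_zero]
  | succ k =>
      simp only [gh, coeff_mk, coeff_succ_X_mul, hsym_cons]
      ring

lemma ge_mul_gh (l : List R) : ge l * gh l = 1 := by
  induction l with
  | nil => rw [ge_nil, gh_nil, one_mul]
  | cons a l ih =>
      rw [ge_cons, mul_comm (1 + C a * X) (ge l), mul_assoc, gh_cons, ih]

lemma ge_eq_prod (l : List R) : ge l = (l.map (fun a => 1 + C a * X)).prod := by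
  induction l with
  | nil => simp [ge_nil]
  | cons a l ih => rw [ge_cons, ih, List.map_cons, List.prod_cons]

lemma esym_perm {l l' : List R} (h : l.Perm l') (k : ℕ) : esym k l = esym k l' := by
  have : ge l = ge l' := by
    rw [ge_eq_prod, ge_eq_prod]
    exact (h.map _).prod_eq
  have := congrArg (coeff k) this
  simpa [ge, coeff_mk] using this

lemma ge_append (l m : List R) : ge (l ++ m) = ge l * ge m := by
  simp [ge_eq_prod, List.map_append, List.prod_append]

lemma key_sum (K : ℕ) (N M : List R) :
    ∑ s ∈ Finset.range (K + 1),
      esym (K - s) (N ++ M) * (-1 : R)^s * hsym s M = esym K N := by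
  have h1 : ∑ s ∈ Finset.range (K + 1),
      esym (K - s) (N ++ M) * (-1 : R)^s * hsym s M
      = (coeff K) (ge (N ++ M) * gh M) := by
    rw [coeff_mul, Finset.Nat.sum_antidiagonal_eq_sum_range_succ_mk]
    rw [← Finset.sum_range_reflect]
    refine Finset.sum_congr rfl fun s hs => ?_
    simp only [Finset.mem_range] at hs
    have h2 : K + 1 - 1 - s = K - s := by omega
    have h3 : K - (K - s) = s := by omega
    rw [h2, h3]
    simp [ge, gh, coeff_mk, mul_assoc]
  rw [h1, ge_append, mul_assoc, ge_mul_gh, mul_one]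
  simp [ge, coeff_mk]

lemma seg_split (f : ℕ → R) {a b : ℕ} (h : a ≤ b) :
    seg f 0 b = seg f 0 a ++ seg f a b := by
  unfold seg
  have hb : b - 0 = a + (b - a) := by omega
  rw [hb, List.range_add, List.map_append, List.map_map]
  congr 1
  refine List.map_congr_left fun m _ => ?_
  simp only [Function.comp_apply]
  congr 1
  omega

lemma esymZ_neg {k : ℤ} (hk : k < 0) (l : List R) : esymZ k l = 0 := by
  simp [esymZ, not_le.mpr hk]

lemma entry_eq (k : ℤ) (X : List R) (t : ℕ → R) (lam μj : ℕ)
    (h : k ≤ 0 ∨ μj ≤ lam - 1) :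
    esymZ k (X ++ seg t μj (lam - 1)) =
      ∑ s ∈ Finset.range (k.toNat + 1),
        esymZ (k - s) (X ++ seg t 0 (lam - 1)) * (-1 : R)^s * hsym s (seg t 0 μj) := by
  rcases lt_trichotomy k 0 with hk | hk | hk
  · have h0 : k.toNat = 0 := by omega
    rw [h0, esymZ_neg hk]
    simp [esymZ_neg hk, hsym_zero]
  · subst hk
    simp [esymZ, esym_zero, hsym_zero]
  · have hμ : μj ≤ lam - 1 := by
      rcases h with h | h; · omega
      · exact h
    have hperm : (X ++ seg t 0 (lam - 1)).Perm
        ((X ++ seg t μj (lam - 1)) ++ seg t 0 μj) := by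
      rw [seg_split t hμ, List.append_assoc]
      exact List.Perm.append_left X List.perm_append_comm
    have hK : (0:ℤ) ≤ k := le_of_lt hk
    calc esymZ k (X ++ seg t μj (lam - 1))
        = esym k.toNat (X ++ seg t μj (lam - 1)) := by simp [esymZ, hK]
      _ = ∑ s ∈ Finset.range (k.toNat + 1),
            esym (k.toNat - s) ((X ++ seg t μj (lam - 1)) ++ seg t 0 μj)
              * (-1 : R)^s * hsym s (seg t 0 μj) := (key_sum _ _ _).symm
      _ = _ := by
          refine Finset.sum_congr rfl fun s hs => ?_
          simp only [Finset.mem_range] at hs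
          have h1 : (0:ℤ) ≤ k - s := by omega
          have h2 : (k - s).toNat = k.toNat - s := by omega
          rw [esymZ, if_pos h1, h2, esym_perm hperm.symm]


end AuxLemmas

/-- Proposition "equivalence": for partitions λ, μ with at most n parts and arbitrary
flags α, β ∈ ℕⁿ,
det( e_{λ_i−μ_j−i+j}[X_{(α_j,β_i]} + T_{(μ_j,λ_i−1]}] )
  = det( e_{λ_i−μ_j−i+j}[X_{(α_j,β_i]} + T_{λ_i−1} − T_{μ_j}] ).
The left entry is the elementary symmetric polynomial in the variables
x_{α_j+1},...,x_{β_i}, t_{μ_j+1},...,t_{λ_i−1}; the right entry is the plethystic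
substitution of the difference, expanded by
e_k[A − B] = Σ_s e_{k−s}[A] (−1)^s h_s[B] with A = X_{(α_j,β_i]} + T_{λ_i−1} and
B = T_{μ_j}. -/
theorem det_esym_plethysm_equivalence {R : Type*} [CommRing R] (n : ℕ) (x t : ℕ → R)
    (α β lam μ : Fin n → ℕ)
    (hlam : ∀ i j : Fin n, i ≤ j → lam j ≤ lam i)
    (hμ : ∀ i j : Fin n, i ≤ j → μ j ≤ μ i) :
    Matrix.det (fun i j : Fin n =>
      esymZ ((lam i : ℤ) - (μ j : ℤ) - (i.val + 1) + (j.val + 1))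
        (seg x (α j) (β i) ++ seg t (μ j) (lam i - 1))) =
    Matrix.det (fun i j : Fin n =>
      ∑ s ∈ Finset.range
          (((lam i : ℤ) - (μ j : ℤ) - (i.val + 1) + (j.val + 1)).toNat + 1),
        esymZ ((lam i : ℤ) - (μ j : ℤ) - (i.val + 1) + (j.val + 1) - s)
            (seg x (α j) (β i) ++ seg t 0 (lam i - 1)) *
          (-1 : R) ^ s * hsym s (seg t 0 (μ j))) := by
  show Matrix.det (Matrix.of fun i j => _) = Matrix.det (Matrix.of fun i j => _)
  rw [Matrix.det_apply', Matrix.det_apply']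
  simp only [Matrix.of_apply]
  refine Finset.sum_congr rfl fun σ _ => ?_
  congr 1
  set k : Fin n → Fin n → ℤ :=
    fun r c => (lam r : ℤ) - (μ c : ℤ) - (r.val + 1) + (c.val + 1) with hkdef
  by_cases hgood : ∀ i : Fin n, k (σ i) i ≤ 0 ∨ μ i ≤ lam (σ i) - 1
  · exact Finset.prod_congr rfl fun i _ =>
      entry_eq (k (σ i) i) (seg x (α i) (β (σ i))) t (lam (σ i)) (μ i) (hgood i)
  · push_neg at hgood
    obtain ⟨i0, hk0, hb0⟩ := hgood
    set r0 := σ i0 with hr0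
    have hk0' : 0 < k r0 i0 := hk0
    have hle : lam r0 ≤ μ i0 := by omega
    have hlt0 : r0.val < i0.val := by
      have := hk0'
      simp only [hkdef] at this
      omega
    have hex : ∃ c1 : Fin n, c1.val ≤ r0.val ∧ r0.val < (σ c1).val := by
      by_contra hcon
      push_neg at hcon
      have hr0n : r0.val < n := r0.isLt
      let emb : Fin (r0.val + 1) → Fin n := fun c =>
        ⟨c.val, lt_of_le_of_lt (Nat.lt_succ_iff.mp c.isLt) (lt_trans hlt0 i0.isLt)⟩
      let f : Fin (r0.val + 1) → Fin (r0.val + 1) := fun c =>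
        ⟨(σ (emb c)).val, Nat.lt_succ_of_le (hcon _ (Nat.lt_succ_iff.mp c.isLt))⟩
      have hfinj : Function.Injective f := by
        intro c d h
        have h1 : (σ (emb c)).val = (σ (emb d)).val := by
          have := congrArg Fin.val h
          simpa [f] using this
        have h2 : emb c = emb d := σ.injective (Fin.ext h1)
        have h3 : c.val = d.val := by
          have := congrArg Fin.val h2
          simpa [emb] using this
        exact Fin.ext h3
      have hfsurj : Function.Surjective f := Finite.injective_iff_surjective.mp hfinj
      obtain ⟨c, hc⟩ := hfsurj ⟨r0.val, Nat.lt_succ_self _⟩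
      have hc1 : (σ (emb c)).val = r0.val := by
        have := congrArg Fin.val hc
        simpa [f] using this
      have hce : emb c = i0 := σ.injective ((Fin.ext hc1).trans hr0)
      have hcv : c.val = i0.val := by
        have := congrArg Fin.val hce
        simpa [emb] using this
      have : c.val ≤ r0.val := Nat.lt_succ_iff.mp c.isLt
      omega
    obtain ⟨c1, hc1, hr1⟩ := hex
    have h1 : lam (σ c1) ≤ lam r0 := hlam r0 (σ c1) (le_of_lt hr1)
    have h2 : μ i0 ≤ μ c1 := hμ c1 i0 (le_of_lt (lt_of_le_of_lt hc1 hlt0))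
    have hk1 : k (σ c1) c1 < 0 := by
      simp only [hkdef]
      omega
    rw [Finset.prod_eq_zero (Finset.mem_univ c1), Finset.prod_eq_zero (Finset.mem_univ c1)]
    · exact (entry_eq (k (σ c1) c1) (seg x (α c1) (β (σ c1))) t (lam (σ c1)) (μ c1)
        (Or.inl (le_of_lt hk1))).symm.trans (esymZ_neg hk1 _)
    · exact esymZ_neg hk1 _
end
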